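/- arXiv:2201.03856 — 3 statements merged into one kernel-verified Lean document; each statement's English description precedes it below -/
import Mathlib

section
/- Let t ∈ ℝ, Y > 0, and σ₁, σ₂ > 0. Then W_t^{(σ₁)}(Y) = W_t^{(σ₂)}(Y); that is, the vertical-line integral defining W_t(Y) is independent of the abscissa σ as long as σ > 0 (no pole of the integrand lies in the half-plane Re(u) > 0). -/
open Complex MeasureTheory Set Filter Topology

noncomputable def F (t Y : ℝ) (u : ℂ) : ℂ :=
  (Y : ℂ) ^ (-u) * Complex.Gamma (1 + t * Complex.I + u) ^ 2 * Complex.exp (u ^ 2) / u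

lemma gamma_norm_le (s : ℂ) (hs : 0 < s.re) : ‖Complex.Gamma s‖ ≤ Real.Gamma s.re := by
  rw [Complex.Gamma_eq_integral hs, Real.Gamma_eq_integral hs]
  calc ‖∫ x in Ioi (0:ℝ), (Real.exp (-x) : ℂ) * (x:ℂ) ^ (s - 1)‖
      ≤ ∫ x in Ioi (0:ℝ), ‖(Real.exp (-x) : ℂ) * (x:ℂ) ^ (s - 1)‖ :=
        norm_integral_le_integral_norm _
    _ = ∫ x in Ioi (0:ℝ), Real.exp (-x) * x ^ (s.re - 1) := by
        apply setIntegral_congr_ae measurableSet_Ioi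
        filter_upwards with x hx
        rw [norm_mul,
          Complex.norm_cpow_eq_rpow_re_of_pos hx, Complex.norm_real, Real.norm_eq_abs,
          abs_of_pos (Real.exp_pos _), Complex.sub_re, Complex.one_re]

lemma F_diffAt (t Y : ℝ) (hY : 0 < Y) {u : ℂ} (hu : 0 < u.re) :
    DifferentiableAt ℂ (F t Y) u := by
  have hY0 : (Y : ℂ) ≠ 0 := by exact_mod_cast hY.ne'
  have hu0 : u ≠ 0 := by intro h; rw [h] at hu; simp at hu
  have h1 : DifferentiableAt ℂ (fun u : ℂ => (Y : ℂ) ^ (-u)) u :=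
    (differentiableAt_id.neg).const_cpow (Or.inl hY0)
  have h2 : DifferentiableAt ℂ (fun u : ℂ => Complex.Gamma (1 + t * Complex.I + u)) u := by
    have harg : ∀ n : ℕ, 1 + (t : ℂ) * Complex.I + u ≠ -n := by
      intro n h
      have : (1 + (t : ℂ) * Complex.I + u).re = (-(n:ℂ)).re := by rw [h]
      simp [Complex.add_re] at this
      nlinarith [this, Nat.cast_nonneg (α := ℝ) n]
    exact (Complex.differentiableAt_Gamma _ harg).comp u
      ((differentiableAt_const _).add differentiableAt_id)
  have h3 : DifferentiableAt ℂ (fun u : ℂ => Complex.exp (u ^ 2)) u :=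
    (differentiableAt_pow 2).cexp
  exact ((h1.mul (h2.pow 2)).mul h3).div differentiableAt_id hu0

lemma F_bound (t Y a b CY M : ℝ) (hY : 0 < Y) (ha : 0 < a)
    (hCY : ∀ x ∈ Icc a b, Y ^ (-x) ≤ CY)
    (hM : ∀ x ∈ Icc a b, Real.Gamma (1 + x) ≤ M)
    {u : ℂ} (hu : u.re ∈ Icc a b) :
    ‖F t Y u‖ ≤ CY * M ^ 2 * Real.exp (b ^ 2) * Real.exp (-u.im ^ 2) / a := by
  have hu0 : a ≤ u.re := hu.1
  have hau : 0 < u.re := lt_of_lt_of_le ha hu0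
  have hun : u ≠ 0 := by intro h; rw [h] at hau; simp at hau
  have hMpos : 0 < M := lt_of_lt_of_le (Real.Gamma_pos_of_pos (by linarith)) (hM _ hu)
  have hCYpos : 0 < CY := lt_of_lt_of_le (Real.rpow_pos_of_pos hY _) (hCY _ hu)
  have hnu : a ≤ ‖u‖ := le_trans hu0 (Complex.re_le_norm u)
  have e1 : ‖(Y : ℂ) ^ (-u)‖ ≤ CY := by
    rw [Complex.norm_cpow_eq_rpow_re_of_pos hY, Complex.neg_re]
    exact hCY _ hu
  have e2 : ‖Complex.Gamma (1 + t * Complex.I + u) ^ 2‖ ≤ M ^ 2 := by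
    rw [norm_pow]
    have := gamma_norm_le (1 + t * Complex.I + u) (by simp [Complex.add_re]; linarith)
    have hre : (1 + (t:ℂ) * Complex.I + u).re = 1 + u.re := by simp [Complex.add_re]
    rw [hre] at this
    exact pow_le_pow_left₀ (norm_nonneg _) (le_trans this (hM _ hu)) 2
  have e3 : ‖Complex.exp (u ^ 2)‖ ≤ Real.exp (b ^ 2) * Real.exp (-u.im ^ 2) := by
    rw [Complex.norm_exp, ← Real.exp_add]
    apply Real.exp_le_exp.2
    have : (u ^ 2).re = u.re ^ 2 - u.im ^ 2 := by rw [sq u, Complex.mul_re]; ring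
    rw [this]
    nlinarith [hu.2, hu.1, ha]
  calc ‖F t Y u‖ = ‖(Y : ℂ) ^ (-u)‖ * ‖Complex.Gamma (1 + t * Complex.I + u) ^ 2‖ *
        ‖Complex.exp (u ^ 2)‖ / ‖u‖ := by
        rw [F]; rw [norm_div, norm_mul, norm_mul]
    _ ≤ CY * M ^ 2 * (Real.exp (b ^ 2) * Real.exp (-u.im ^ 2)) / a := by
        apply div_le_div₀ (by positivity) ?_ ha hnu
        exact mul_le_mul (mul_le_mul e1 e2 (norm_nonneg _) hCYpos.le) e3 (norm_nonneg _)
          (by positivity)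
    _ = CY * M ^ 2 * Real.exp (b ^ 2) * Real.exp (-u.im ^ 2) / a := by ring

lemma key_eq (t Y a b : ℝ) (hY : 0 < Y) (ha : 0 < a) (hab : a ≤ b) :
    (∫ v : ℝ, F t Y (a + v * Complex.I)) = ∫ v : ℝ, F t Y (b + v * Complex.I) := by
  -- constants
  set CY := Real.exp (max (-a * Real.log Y) (-b * Real.log Y)) with hCYdef
  have hCY : ∀ x ∈ Icc a b, Y ^ (-x) ≤ CY := by
    intro x hx
    rw [Real.rpow_def_of_pos hY]
    apply Real.exp_le_exp.2
    rcases le_or_gt 0 (Real.log Y) with h | h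
    · exact le_max_of_le_left (by nlinarith [hx.1])
    · exact le_max_of_le_right (by nlinarith [hx.2])
  obtain ⟨c, hc, hcmax⟩ := isCompact_Icc.exists_isMaxOn
    (nonempty_Icc.2 (by linarith : (1:ℝ) + a ≤ 1 + b))
    (fun x hx => (Real.differentiableAt_Gamma (fun m => by
      have hx0 : (0:ℝ) < x := by have := hx.1; linarith
      intro h; rw [h] at hx0
      nlinarith [Nat.cast_nonneg (α := ℝ) m])).continuousAt.continuousWithinAt)
  set M := Real.Gamma c with hMdef
  have hM : ∀ x ∈ Icc a b, Real.Gamma (1 + x) ≤ M :=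
    fun x hx => hcmax ⟨by linarith [hx.1], by linarith [hx.2]⟩
  set C := CY * M ^ 2 * Real.exp (b ^ 2) / a with hCdef
  have hC : 0 ≤ C := by
    have hMpos : 0 < M := lt_of_lt_of_le (Real.Gamma_pos_of_pos (by linarith)) (hM a ⟨le_refl a, hab⟩)
    positivity
  -- Gaussian dominating function
  have hg : Integrable (fun v : ℝ => C * Real.exp (-v ^ 2)) := by
    have := integrable_exp_neg_mul_sq (b := 1) one_pos
    simpa using this.const_mul C
  have hre : ∀ (σ v : ℝ), ((σ : ℂ) + v * Complex.I).re = σ := by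
    intro σ v; simp
  have him : ∀ (σ v : ℝ), ((σ : ℂ) + v * Complex.I).im = v := by
    intro σ v; simp
  -- integrability on vertical lines
  have hInt : ∀ σ : ℝ, σ ∈ Icc a b → Integrable (fun v : ℝ => F t Y (σ + v * Complex.I)) := by
    intro σ hσ
    have hσ0 : 0 < σ := lt_of_lt_of_le ha hσ.1
    have hcont : Continuous (fun v : ℝ => F t Y (σ + v * Complex.I)) := by
      rw [continuous_iff_continuousAt]
      intro v
      exact ((F_diffAt t Y hY (by rw [hre]; exact hσ0)).continuousAt).comp
        (by continuity : Continuous fun v : ℝ => (σ : ℂ) + v * Complex.I).continuousAt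
    apply hg.mono' hcont.aestronglyMeasurable
    filter_upwards with v
    have := F_bound t Y a b CY M hY ha hCY hM (u := σ + v * Complex.I) (by rw [hre]; exact hσ)
    rw [him] at this
    calc ‖F t Y (σ + v * Complex.I)‖ ≤ CY * M ^ 2 * Real.exp (b ^ 2) * Real.exp (-v ^ 2) / a :=
          this
      _ = C * Real.exp (-v ^ 2) := by rw [hCdef]; ring
  -- horizontal integral bound
  have hhor : ∀ T : ℝ, ‖∫ x in a..b, F t Y (x + T * Complex.I)‖
      ≤ C * Real.exp (-T ^ 2) * |b - a| := by
    intro T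
    apply intervalIntegral.norm_integral_le_of_norm_le_const
    intro x hx
    rw [uIoc_of_le hab] at hx
    have := F_bound t Y a b CY M hY ha hCY hM (u := x + T * Complex.I)
      (by rw [hre]; exact ⟨hx.1.le, hx.2⟩)
    rw [him] at this
    calc ‖F t Y (x + T * Complex.I)‖ ≤ CY * M ^ 2 * Real.exp (b ^ 2) * Real.exp (-T ^ 2) / a :=
          this
      _ = C * Real.exp (-T ^ 2) := by rw [hCdef]; ring
  -- rectangle identity
  have hrect : ∀ T : ℝ,
      Complex.I • (∫ y in (-T)..T, F t Y (b + y * Complex.I)) -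
        Complex.I • (∫ y in (-T)..T, F t Y (a + y * Complex.I))
      = (∫ x in a..b, F t Y (x + (T : ℝ) * Complex.I)) -
        (∫ x in a..b, F t Y (x + (-T : ℝ) * Complex.I)) := by
    intro T
    have hdiff : DifferentiableOn ℂ (F t Y)
        (Set.uIcc ((a:ℂ) + (-T:ℝ) * Complex.I).re ((b:ℂ) + (T:ℝ) * Complex.I).re ×ℂ
          Set.uIcc ((a:ℂ) + (-T:ℝ) * Complex.I).im ((b:ℂ) + (T:ℝ) * Complex.I).im) := by
      intro u hu
      have hre' : u.re ∈ Set.uIcc a b := by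
        have := hu.1
        simpa [hre] using this
      rw [uIcc_of_le hab] at hre'
      exact (F_diffAt t Y hY (lt_of_lt_of_le ha hre'.1)).differentiableWithinAt
    have := Complex.integral_boundary_rect_eq_zero_of_differentiableOn (F t Y)
      ((a:ℂ) + (-T:ℝ) * Complex.I) ((b:ℂ) + (T:ℝ) * Complex.I) hdiff
    simp only [Complex.add_re, Complex.add_im, Complex.ofReal_re, Complex.ofReal_im,
      Complex.mul_re, Complex.mul_im, Complex.I_re, Complex.I_im, Complex.neg_re,
      Complex.neg_im, Complex.ofReal_neg, mul_zero, mul_one, zero_mul, sub_zero,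
      zero_sub, add_zero, zero_add, neg_neg, neg_zero] at this ⊢
    linear_combination this
  -- limits
  have hexp : Tendsto (fun T : ℝ => C * Real.exp (-T ^ 2) * |b - a|) atTop (𝓝 0) := by
    have h1 : Tendsto (fun T : ℝ => Real.exp (-T ^ 2)) atTop (𝓝 0) :=
      Real.tendsto_exp_neg_atTop_nhds_zero.comp (tendsto_pow_atTop two_ne_zero)
    have := (h1.const_mul C).mul_const |b - a|
    simpa using this
  have hV : ∀ σ : ℝ, σ ∈ Icc a b →
      Tendsto (fun T : ℝ => ∫ y in (-T)..T, F t Y (σ + y * Complex.I)) atTop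
        (𝓝 (∫ v : ℝ, F t Y (σ + v * Complex.I))) := by
    intro σ hσ
    exact intervalIntegral_tendsto_integral (hInt σ hσ) tendsto_neg_atTop_atBot tendsto_id
  have hlim1 : Tendsto (fun T : ℝ =>
      Complex.I • (∫ y in (-T)..T, F t Y (b + y * Complex.I)) -
        Complex.I • (∫ y in (-T)..T, F t Y (a + y * Complex.I))) atTop
      (𝓝 (Complex.I • (∫ v : ℝ, F t Y (b + v * Complex.I)) -
        Complex.I • (∫ v : ℝ, F t Y (a + v * Complex.I)))) :=
    ((hV b ⟨hab, le_refl b⟩).const_smul _).sub ((hV a ⟨le_refl a, hab⟩).const_smul _)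
  have hlim2 : Tendsto (fun T : ℝ =>
      Complex.I • (∫ y in (-T)..T, F t Y (b + y * Complex.I)) -
        Complex.I • (∫ y in (-T)..T, F t Y (a + y * Complex.I))) atTop (𝓝 0) := by
    rw [tendsto_zero_iff_norm_tendsto_zero]
    apply squeeze_zero (g := fun T => 2 * (C * Real.exp (-T ^ 2) * |b - a|))
      (fun T => norm_nonneg _) ?_ ?_
    · intro T
      rw [hrect T]
      calc ‖(∫ x in a..b, F t Y (x + (T:ℝ) * Complex.I)) -
            (∫ x in a..b, F t Y (x + (-T:ℝ) * Complex.I))‖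
          ≤ ‖∫ x in a..b, F t Y (x + (T:ℝ) * Complex.I)‖ +
            ‖∫ x in a..b, F t Y (x + (-T:ℝ) * Complex.I)‖ := norm_sub_le _ _
        _ ≤ C * Real.exp (-T ^ 2) * |b - a| + C * Real.exp (-(-T) ^ 2) * |b - a| := by
            exact add_le_add (hhor T) (hhor (-T))
        _ = 2 * (C * Real.exp (-T ^ 2) * |b - a|) := by rw [neg_pow]; ring_nf
    · have := hexp.const_mul 2
      simpa using this
  have := tendsto_nhds_unique hlim1 hlim2
  have h2 : Complex.I • ((∫ v : ℝ, F t Y (b + v * Complex.I)) -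
      (∫ v : ℝ, F t Y (a + v * Complex.I))) = 0 := by
    rw [smul_sub]; exact this
  rcases smul_eq_zero.1 h2 with h | h
  · exact absurd h Complex.I_ne_zero
  · exact (sub_eq_zero.1 h).symm

/-- The vertical-line integral `W_t^{(σ)}(Y)` from the paper:
`W_t^{(σ)}(Y) = (1/2π) ∫_{−∞}^{∞} Y^{−(σ+iv)} Γ(1+it+σ+iv)² e^{(σ+iv)²} (σ+iv)^{−1} dv`. -/
noncomputable def W (t σ Y : ℝ) : ℂ :=
  (1 / (2 * Real.pi)) * ∫ v : ℝ,
    (Y : ℂ) ^ (-((σ : ℂ) + v * Complex.I)) *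
      Complex.Gamma (1 + t * Complex.I + σ + v * Complex.I) ^ 2 *
      Complex.exp (((σ : ℂ) + v * Complex.I) ^ 2) / ((σ : ℂ) + v * Complex.I)

theorem stmt_3 (t Y σ₁ σ₂ : ℝ) (hY : 0 < Y) (hσ₁ : 0 < σ₁) (hσ₂ : 0 < σ₂) :
    W t σ₁ Y = W t σ₂ Y := by
  have hW : ∀ σ : ℝ, W t σ Y = (1 / (2 * Real.pi)) * ∫ v : ℝ, F t Y (σ + v * Complex.I) := by
    intro σ
    rw [W]
    congr 1
    simp only [F, add_assoc]
  rw [hW, hW]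
  rcases le_total σ₁ σ₂ with h | h
  · rw [key_eq t Y σ₁ σ₂ hY hσ₁ h]
  · rw [key_eq t Y σ₂ σ₁ hY hσ₂ h]
end

section
/- Let p be a prime. For every complex number s with Re(s) > 1, the series ∑_{ℓ=1}^{∞} τ(p·ℓ²)·ℓ^{−s} converges and equals (2/(1+p^{−s}))·ζ(s)³/ζ(2s). -/
open Complex ArithmeticFunction Finset
open scoped LSeries.notation
open scoped ArithmeticFunction.Moebius ArithmeticFunction.zeta

-- helper: convolution at prime powers
private lemma conv_pp (f g : ArithmeticFunction ℂ) {q : ℕ} (hq : q.Prime) (k : ℕ) :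
    (f * g) (q ^ k) = ∑ i ∈ range (k + 1), f (q ^ i) * g (q ^ (k - i)) := by
  rw [mul_apply, Nat.sum_divisorsAntidiagonal (f := fun a b => f a * g b),
    Nat.sum_divisors_prime_pow hq]
  refine Finset.sum_congr rfl fun i hi => ?_
  rw [Nat.pow_div (by simpa [Nat.lt_succ_iff] using hi) hq.pos]

noncomputable def Ep (p : ℕ) : ArithmeticFunction ℂ :=
  ⟨fun n => if p ^ n.factorization p = n then (-1 : ℂ) ^ n.factorization p else 0, by simp⟩

noncomputable def MSQ : ArithmeticFunction ℂ :=
  ⟨fun n => if Nat.sqrt n ^ 2 = n then (μ (Nat.sqrt n) : ℂ) else 0, by simp⟩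

noncomputable def SQF : ArithmeticFunction ℂ :=
  ⟨fun n => if Squarefree n then 1 else 0, by simp [not_squarefree_zero]⟩

noncomputable def D2 : ArithmeticFunction ℂ :=
  ⟨fun n => ((n ^ 2).divisors.card : ℂ), by simp⟩

noncomputable def Hf (p : ℕ) : ArithmeticFunction ℂ :=
  ⟨fun n => ((p * n ^ 2).divisors.card : ℂ) / 2, by simp⟩

lemma Ep_self {p : ℕ} (hp : p.Prime) (k : ℕ) : Ep p (p ^ k) = (-1) ^ k := by
  have h : (p ^ k).factorization p = k := by
    rw [hp.factorization_pow]; exact Finsupp.single_eq_same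
  simp only [Ep, ArithmeticFunction.coe_mk, h, if_true, eq_self_iff_true]

lemma Ep_other {p q : ℕ} (hq : q.Prime) (hne : q ≠ p) (j : ℕ) :
    Ep p (q ^ j) = if j = 0 then 1 else 0 := by
  have h : (q ^ j).factorization p = 0 := by
    rw [hq.factorization_pow]; exact Finsupp.single_eq_of_ne' hne
  simp only [Ep, ArithmeticFunction.coe_mk, h, pow_zero]
  rcases Nat.eq_zero_or_pos j with rfl | hj
  · simp
  · have h1 : (1 : ℕ) ≠ q ^ j := (Nat.one_lt_pow hj.ne' hq.one_lt).ne
    rw [if_neg h1, if_neg hj.ne']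

lemma MSQ_pp {q : ℕ} (hq : q.Prime) (j : ℕ) :
    MSQ (q ^ j) = if j = 0 then 1 else if j = 2 then -1 else 0 := by
  rcases Nat.even_or_odd j with ⟨t, ht⟩ | hodd
  · subst ht
    have hsq : (q ^ t) ^ 2 = q ^ (t + t) := by ring
    have h : Nat.sqrt (q ^ (t + t)) = q ^ t := by rw [← hsq, Nat.sqrt_eq']
    simp only [MSQ, ArithmeticFunction.coe_mk, h, hsq, if_true, eq_self_iff_true]
    match t with
    | 0 => simp
    | 1 => simp [moebius_apply_prime hq]
    | (t + 2) =>
      rw [moebius_apply_prime_pow hq (by omega)]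
      have h1 : ¬ (t + 2) + (t + 2) = 0 := by omega
      have h2 : ¬ (t + 2) + (t + 2) = 2 := by omega
      simp [h1, h2]
  · have hcond : ¬ Nat.sqrt (q ^ j) ^ 2 = q ^ j := by
      intro h
      have hd : Nat.sqrt (q ^ j) ∣ q ^ j := dvd_trans (dvd_pow_self _ two_ne_zero) (dvd_of_eq h)
      obtain ⟨i, _, hEq⟩ := (Nat.dvd_prime_pow hq).1 hd
      rw [hEq, ← pow_mul] at h
      have := Nat.pow_right_injective hq.two_le h
      exact (Nat.not_even_iff_odd.2 hodd) ⟨i, by omega⟩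
    have h0 : j ≠ 0 := by rintro rfl; exact (Nat.not_even_iff_odd.2 hodd) Even.zero
    have h2 : j ≠ 2 := by rintro rfl; exact (Nat.not_even_iff_odd.2 hodd) (by decide)
    simp only [MSQ, ArithmeticFunction.coe_mk, if_neg hcond, if_neg h0, if_neg h2]

lemma SQF_pp {q : ℕ} (hq : q.Prime) (j : ℕ) :
    SQF (q ^ j) = if j ≤ 1 then 1 else 0 := by
  match j with
  | 0 => simp [SQF, squarefree_one]
  | 1 => simp [SQF, hq.squarefree]
  | (j + 2) =>
    have : ¬ Squarefree (q ^ (j + 2)) := by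
      rw [Nat.squarefree_pow_iff hq.ne_one (by omega)]
      rintro ⟨-, h⟩; omega
    simp [SQF, this]

lemma D2_pp {q : ℕ} (hq : q.Prime) (k : ℕ) : D2 (q ^ k) = ((2 * k + 1 : ℕ) : ℂ) := by
  have h : (q ^ k) ^ 2 = q ^ (2 * k) := by ring
  simp only [D2, ArithmeticFunction.coe_mk, h]
  rw [← ArithmeticFunction.sigma_zero_apply, ArithmeticFunction.sigma_zero_apply_prime_pow hq]

lemma Z_pp {q : ℕ} (hq : q.Prime) (i : ℕ) : ((ζ : ArithmeticFunction ℂ)) (q ^ i) = 1 := by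
  simp [natCoe_apply, ArithmeticFunction.zeta_apply, pow_ne_zero i hq.pos.ne', hq.ne_zero]

lemma ZZ_pp {q : ℕ} (hq : q.Prime) (k : ℕ) :
    ((ζ : ArithmeticFunction ℂ) * (ζ : ArithmeticFunction ℂ)) (q ^ k) = ((k + 1 : ℕ) : ℂ) := by
  rw [conv_pp _ _ hq]
  simp [Z_pp hq]

lemma alt_sum (k : ℕ) :
    ∑ j ∈ range (k + 1), (-1 : ℂ) ^ j * ((2 * (k - j) + 1 : ℕ) : ℂ) = ((k + 1 : ℕ) : ℂ) := by
  induction k with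
  | zero => simp
  | succ k ih =>
    rw [Finset.sum_range_succ']
    have h : ∀ i, (-1 : ℂ) ^ (i + 1) * ((2 * (k + 1 - (i + 1)) + 1 : ℕ) : ℂ) =
        -((-1 : ℂ) ^ i * ((2 * (k - i) + 1 : ℕ) : ℂ)) := by
      intro i
      rw [Nat.succ_sub_succ_eq_sub, pow_succ]
      ring
    rw [Finset.sum_congr rfl fun i _ => h i, Finset.sum_neg_distrib, ih]
    push_cast
    ring

lemma isMult_D2 : D2.IsMultiplicative := by
  refine ⟨by simp [D2], fun {m n} hmn => ?_⟩
  simp only [D2, ArithmeticFunction.coe_mk]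
  rw [mul_pow, Nat.Coprime.card_divisors_mul (Nat.Coprime.pow 2 2 hmn)]
  push_cast; ring

lemma isMult_SQF : SQF.IsMultiplicative := by
  refine ⟨by simp [SQF, squarefree_one], fun {m n} hmn => ?_⟩
  simp only [SQF, ArithmeticFunction.coe_mk]
  simp only [Nat.squarefree_mul hmn]
  by_cases h1 : Squarefree m <;> by_cases h2 : Squarefree n <;> simp [h1, h2]

lemma isMult_MSQ : MSQ.IsMultiplicative := by
  have key : ∀ m n : ℕ, m.Coprime n → ¬ Nat.sqrt m ^ 2 = m →
      ¬ Nat.sqrt (m * n) ^ 2 = m * n := by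
    intro m n hmn hm h
    obtain ⟨d, hd⟩ := exists_eq_pow_of_mul_eq_pow
      (by rw [gcd_eq_nat_gcd, hmn.gcd_eq_one]; exact isUnit_one) h.symm
    exact hm (by rw [hd, Nat.sqrt_eq'])
  refine ⟨by simp [MSQ], fun {m n} hmn => ?_⟩
  simp only [MSQ, ArithmeticFunction.coe_mk]
  by_cases hm : Nat.sqrt m ^ 2 = m
  · by_cases hn : Nat.sqrt n ^ 2 = n
    · have hmn2 : Nat.sqrt (m * n) = Nat.sqrt m * Nat.sqrt n := by
        conv_lhs => rw [← hm, ← hn]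
        rw [← mul_pow, Nat.sqrt_eq']
      have hdm : Nat.sqrt m ∣ m := dvd_trans (dvd_pow_self _ two_ne_zero) (dvd_of_eq hm)
      have hdn : Nat.sqrt n ∣ n := dvd_trans (dvd_pow_self _ two_ne_zero) (dvd_of_eq hn)
      have hcop : (Nat.sqrt m).Coprime (Nat.sqrt n) :=
        Nat.Coprime.coprime_dvd_left hdm (Nat.Coprime.coprime_dvd_right hdn hmn)
      rw [if_pos hm, if_pos hn, if_pos (by rw [hmn2, mul_pow, hm, hn]), hmn2,
        isMultiplicative_moebius.map_mul_of_coprime hcop]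
      push_cast; ring
    · rw [if_neg hn, if_neg (by
        rw [mul_comm]; exact key n m hmn.symm hn), mul_zero]
  · rw [if_neg hm, if_neg (key m n hmn hm), zero_mul]

lemma isMult_Ep {p : ℕ} (hp : p.Prime) : (Ep p).IsMultiplicative := by
  refine ⟨by simp [Ep], fun {m n} hmn => ?_⟩
  rcases eq_or_ne m 0 with rfl | hm0
  · simp
  rcases eq_or_ne n 0 with rfl | hn0
  · simp
  have hfac : (m * n).factorization p = m.factorization p + n.factorization p := by
    rw [Nat.factorization_mul hm0 hn0]; rfl
  simp only [Ep, ArithmeticFunction.coe_mk, hfac]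
  by_cases hm : p ^ m.factorization p = m
  · by_cases hn : p ^ n.factorization p = n
    · rw [if_pos hm, if_pos hn, if_pos (show p ^ (m.factorization p + n.factorization p) = m * n by rw [pow_add, hm, hn])]
      exact pow_add _ _ _
    · rw [if_neg ?_, if_neg hn, mul_zero]
      intro h
      have hd : n ∣ p ^ (m.factorization p + n.factorization p) := ⟨m, by rw [h]; ring⟩
      obtain ⟨i, _, rfl⟩ := (Nat.dvd_prime_pow hp).1 hd
      exact hn (by rw [hp.factorization_pow, Finsupp.single_eq_same])
  · rw [if_neg ?_, if_neg hm, zero_mul]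
    intro h
    have hd : m ∣ p ^ (m.factorization p + n.factorization p) := ⟨n, h⟩
    obtain ⟨i, _, rfl⟩ := (Nat.dvd_prime_pow hp).1 hd
    exact hm (by rw [hp.factorization_pow, Finsupp.single_eq_same])

lemma card_divisors_prime {p : ℕ} (hp : p.Prime) : p.divisors.card = 2 := by
  rw [← ArithmeticFunction.sigma_zero_apply, ← pow_one p,
    ArithmeticFunction.sigma_zero_apply_prime_pow hp]

lemma isMult_Hf {p : ℕ} (hp : p.Prime) : (Hf p).IsMultiplicative := by
  refine ⟨by simp [Hf, card_divisors_prime hp], fun {m n} hmn => ?_⟩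
  rcases eq_or_ne m 0 with rfl | hm0
  · have : n = 1 := by simpa using hmn
    subst this; simp [Hf]
  rcases eq_or_ne n 0 with rfl | hn0
  · have : m = 1 := by simpa using hmn
    subst this; simp [Hf]
  simp only [Hf, ArithmeticFunction.coe_mk]
  by_cases hpn : p ∣ n
  · have hpm : ¬ p ∣ m := fun h =>
      hp.one_lt.ne' (Nat.dvd_one.mp (hmn.gcd_eq_one ▸ Nat.dvd_gcd h hpn))
    have cpm : Nat.Coprime p m := (Nat.Prime.coprime_iff_not_dvd hp).2 hpm
    have e1 : p * (m * n) ^ 2 = m ^ 2 * (p * n ^ 2) := by ring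
    have c1 : Nat.Coprime (m ^ 2) (p * n ^ 2) :=
      Nat.Coprime.mul_right (Nat.Coprime.pow_left 2 cpm.symm)
        (Nat.Coprime.pow 2 2 hmn)
    have c2 : Nat.Coprime p (m ^ 2) := Nat.Coprime.pow_right 2 cpm
    rw [e1, c1.card_divisors_mul, c2.card_divisors_mul, card_divisors_prime hp]
    push_cast; ring
  · have cpn : Nat.Coprime p n := (Nat.Prime.coprime_iff_not_dvd hp).2 hpn
    have e1 : p * (m * n) ^ 2 = (p * m ^ 2) * n ^ 2 := by ring
    have c1 : Nat.Coprime (p * m ^ 2) (n ^ 2) :=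
      Nat.Coprime.mul (Nat.Coprime.pow_right 2 cpn) (Nat.Coprime.pow 2 2 hmn)
    have c2 : Nat.Coprime p (n ^ 2) := Nat.Coprime.pow_right 2 cpn
    rw [e1, c1.card_divisors_mul, c2.card_divisors_mul, card_divisors_prime hp]
    push_cast; ring

lemma idA : SQF = MSQ * (ζ : ArithmeticFunction ℂ) := by
  rw [ArithmeticFunction.IsMultiplicative.eq_iff_eq_on_prime_powers _ isMult_SQF _
    (isMult_MSQ.mul (isMultiplicative_zeta.natCast))]
  intro q k hq
  rw [conv_pp _ _ hq, SQF_pp hq]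
  have hsummand : ∀ i ∈ range (k + 1), MSQ (q ^ i) * (ζ : ArithmeticFunction ℂ) (q ^ (k - i)) =
      (if i = 0 then (1 : ℂ) else 0) + (if i = 2 then (-1 : ℂ) else 0) := by
    intro i _
    rw [MSQ_pp hq, Z_pp hq, mul_one]
    split_ifs <;> simp_all
  rw [Finset.sum_congr rfl hsummand, Finset.sum_add_distrib,
    Finset.sum_ite_eq' (range (k + 1)) 0 (fun _ => (1 : ℂ)),
    Finset.sum_ite_eq' (range (k + 1)) 2 (fun _ => (-1 : ℂ))]
  simp only [Finset.mem_range]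
  by_cases hk : k ≤ 1
  · rw [if_pos hk, if_pos (by omega), if_neg (by omega)]; norm_num
  · rw [if_neg hk, if_pos (by omega), if_pos (by omega)]; norm_num

lemma idB : D2 = SQF * ((ζ : ArithmeticFunction ℂ) * (ζ : ArithmeticFunction ℂ)) := by
  rw [ArithmeticFunction.IsMultiplicative.eq_iff_eq_on_prime_powers _ isMult_D2 _
    (isMult_SQF.mul ((isMultiplicative_zeta.natCast).mul (isMultiplicative_zeta.natCast)))]
  intro q k hq
  rw [conv_pp _ _ hq, D2_pp hq]
  have hsummand : ∀ i ∈ range (k + 1),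
      SQF (q ^ i) * ((ζ : ArithmeticFunction ℂ) * (ζ : ArithmeticFunction ℂ)) (q ^ (k - i)) =
      (if i = 0 then ((k - i + 1 : ℕ) : ℂ) else 0) + (if i = 1 then ((k - i + 1 : ℕ) : ℂ) else 0) := by
    intro i _
    rw [SQF_pp hq, ZZ_pp hq]
    split_ifs <;> simp_all <;> omega
  rw [Finset.sum_congr rfl hsummand, Finset.sum_add_distrib,
    Finset.sum_ite_eq' (range (k + 1)) 0 (fun i => ((k - i + 1 : ℕ) : ℂ)),
    Finset.sum_ite_eq' (range (k + 1)) 1 (fun i => ((k - i + 1 : ℕ) : ℂ))]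
  simp only [Finset.mem_range]
  rcases Nat.eq_zero_or_pos k with rfl | hk
  · norm_num
  · rw [if_pos (by omega), if_pos (by omega)]
    have h1 : k - 0 + 1 = k + 1 := by omega
    have h2 : k - 1 + 1 = k := by omega
    rw [h1, h2]
    push_cast; ring

lemma idC {p : ℕ} (hp : p.Prime) : Hf p = Ep p * D2 := by
  rw [ArithmeticFunction.IsMultiplicative.eq_iff_eq_on_prime_powers _ (isMult_Hf hp) _
    ((isMult_Ep hp).mul isMult_D2)]
  intro q k hq
  rw [conv_pp _ _ hq]
  by_cases hqp : q = p
  · subst hqp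
    have hsummand : ∀ i ∈ range (k + 1), Ep q (q ^ i) * D2 (q ^ (k - i)) =
        (-1 : ℂ) ^ i * ((2 * (k - i) + 1 : ℕ) : ℂ) := by
      intro i _
      rw [Ep_self hq, D2_pp hq]
    rw [Finset.sum_congr rfl hsummand, alt_sum]
    have he : q * (q ^ k) ^ 2 = q ^ (2 * k + 1) := by ring
    simp only [Hf, ArithmeticFunction.coe_mk, he]
    rw [← ArithmeticFunction.sigma_zero_apply, ArithmeticFunction.sigma_zero_apply_prime_pow hq]
    push_cast; ring
  · have hsummand : ∀ i ∈ range (k + 1), Ep p (q ^ i) * D2 (q ^ (k - i)) =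
        (if i = 0 then ((2 * (k - i) + 1 : ℕ) : ℂ) else 0) := by
      intro i _
      rw [Ep_other hq hqp, D2_pp hq]
      split_ifs <;> simp
    rw [Finset.sum_congr rfl hsummand,
      Finset.sum_ite_eq' (range (k + 1)) 0 (fun i => ((2 * (k - i) + 1 : ℕ) : ℂ)),
      if_pos (by simp), Nat.sub_zero]
    have he : p * (q ^ k) ^ 2 = p * q ^ (2 * k) := by ring
    have cpq : Nat.Coprime p (q ^ (2 * k)) :=
      Nat.Coprime.pow_right _ ((Nat.coprime_primes hp hq).2 (fun h => hqp h.symm))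
    simp only [Hf, ArithmeticFunction.coe_mk, he]
    rw [cpq.card_divisors_mul, card_divisors_prime hp,
      ← ArithmeticFunction.sigma_zero_apply, ArithmeticFunction.sigma_zero_apply_prime_pow hq]
    push_cast
    ring

open LSeries

lemma hasSum_Ep {p : ℕ} (hp : p.Prime) {s : ℂ} (hs : 1 < s.re) :
    LSeriesHasSum ↗(Ep p) s (1 + (p : ℂ) ^ (-s))⁻¹ := by
  have hr : ‖-((p : ℂ) ^ (-s))‖ < 1 := by
    rw [norm_neg, Complex.norm_natCast_cpow_of_pos hp.pos]
    refine Real.rpow_lt_one_of_one_lt_of_neg (by exact_mod_cast hp.one_lt) ?_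
    simp only [neg_re]; linarith
  have hgeo := hasSum_geometric_of_norm_lt_one hr
  rw [sub_neg_eq_add] at hgeo
  have hinj : Function.Injective (p ^ · : ℕ → ℕ) := Nat.pow_right_injective hp.two_le
  refine (Function.Injective.hasSum_iff hinj ?_).mp ?_
  · intro n hn
    rcases eq_or_ne n 0 with rfl | hn0
    · exact LSeries.term_zero _ _
    · rw [LSeries.term_of_ne_zero hn0]
      have : Ep p n = 0 := by
        simp only [Ep, ArithmeticFunction.coe_mk]
        exact if_neg fun h => hn ⟨n.factorization p, h⟩
      rw [this, zero_div]
  · have key : ∀ k : ℕ, LSeries.term ↗(Ep p) s (p ^ k) = (-((p : ℂ) ^ (-s))) ^ k := by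
      intro k
      rw [LSeries.term_of_ne_zero (pow_ne_zero k hp.pos.ne'), Ep_self hp]
      have h1 : ((p ^ k : ℕ) : ℂ) ^ s = ((p : ℂ) ^ s) ^ k := by
        push_cast
        rw [← Complex.cpow_nat_mul' (x := (p : ℂ)) (n := k)
          (by rw [Complex.natCast_arg, mul_zero]; exact neg_lt_zero.2 Real.pi_pos)
          (by rw [Complex.natCast_arg, mul_zero]; exact Real.pi_pos.le),
          Complex.cpow_nat_mul]
      rw [h1, Complex.cpow_neg, div_eq_mul_inv, ← inv_pow, ← mul_pow, neg_one_mul]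
    have hco : (LSeries.term ↗(Ep p) s ∘ fun k => p ^ k) = fun k => (-((p : ℂ) ^ (-s))) ^ k :=
      funext fun k => key k
    rw [hco]
    exact hgeo

lemma hasSum_MSQ {s : ℂ} (hs : 1 < s.re) :
    LSeriesHasSum ↗MSQ s (riemannZeta (2 * s))⁻¹ := by
  have h2s : 1 < (2 * s).re := by
    have : (2 * s).re = 2 * s.re := by simp [Complex.mul_re]
    rw [this]; linarith
  have hsum := (ArithmeticFunction.LSeriesSummable_moebius_iff.2 h2s).LSeriesHasSum
  have hval : LSeries ↗(ArithmeticFunction.moebius) (2 * s) = (riemannZeta (2 * s))⁻¹ := by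
    have h1 := ArithmeticFunction.LSeries_zeta_mul_Lseries_moebius h2s
    rw [ArithmeticFunction.LSeries_zeta_eq_riemannZeta h2s] at h1
    exact (inv_eq_of_mul_eq_one_right h1).symm
  rw [hval] at hsum
  have hinj : Function.Injective (fun m : ℕ => m ^ 2) :=
    Nat.pow_left_injective two_ne_zero
  refine (Function.Injective.hasSum_iff hinj ?_).mp ?_
  · intro n hn
    have hn0 : n ≠ 0 := fun h => hn ⟨0, by simp [h]⟩
    rw [LSeries.term_of_ne_zero hn0]
    have : MSQ n = 0 := by
      simp only [MSQ, ArithmeticFunction.coe_mk]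
      exact if_neg fun h => hn ⟨Nat.sqrt n, h⟩
    rw [this, zero_div]
  · have key : ∀ m : ℕ, LSeries.term ↗MSQ s (m ^ 2) = LSeries.term ↗(ArithmeticFunction.moebius) (2 * s) m := by
      intro m
      rcases eq_or_ne m 0 with rfl | hm0
      · simp
      · rw [LSeries.term_of_ne_zero (pow_ne_zero 2 hm0), LSeries.term_of_ne_zero hm0]
        have hnum : MSQ (m ^ 2) = (ArithmeticFunction.moebius m : ℂ) := by
          simp [MSQ, Nat.sqrt_eq']
        have hden : ((m ^ 2 : ℕ) : ℂ) ^ s = (m : ℂ) ^ (2 * s) := by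
          push_cast
          rw [show ((2 : ℂ) * s) = ((2 : ℕ) : ℂ) * s by norm_num,
            Complex.cpow_nat_mul' (x := (m : ℂ)) (n := 2)
            (by rw [Complex.natCast_arg, mul_zero]; exact neg_lt_zero.2 Real.pi_pos)
            (by rw [Complex.natCast_arg, mul_zero]; exact Real.pi_pos.le)]
        rw [hnum, hden]
    have hco : (LSeries.term ↗MSQ s ∘ fun m => m ^ 2) =
        fun m => LSeries.term ↗(ArithmeticFunction.moebius) (2 * s) m := funext fun m => key m
    rw [hco]
    exact hsum

theorem stmt_5 (p : ℕ) (hp : p.Prime) (s : ℂ) (hs : 1 < s.re) :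
    HasSum (fun n : ℕ => (((p * (n + 1) ^ 2 : ℕ).divisors.card : ℂ)) / ((n + 1 : ℕ) : ℂ) ^ s)
      (2 / (1 + (p : ℂ) ^ (-s)) * (riemannZeta s ^ 3 / riemannZeta (2 * s))) := by
  have hzeta : LSeriesHasSum ↗((ζ : ArithmeticFunction ℂ)) s (riemannZeta s) := by
    have h := ArithmeticFunction.LSeriesHasSum_zeta hs
    simpa only [ArithmeticFunction.natCoe_apply] using h
  have hprod := ArithmeticFunction.LSeriesHasSum_mul (hasSum_Ep hp hs)
    (ArithmeticFunction.LSeriesHasSum_mul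
      (ArithmeticFunction.LSeriesHasSum_mul (hasSum_MSQ hs) hzeta)
      (ArithmeticFunction.LSeriesHasSum_mul hzeta hzeta))
  have hid : Hf p = Ep p * ((MSQ * (ζ : ArithmeticFunction ℂ)) *
      ((ζ : ArithmeticFunction ℂ) * (ζ : ArithmeticFunction ℂ))) := by
    rw [idC hp, idB, idA]
  rw [← hid] at hprod
  have hH : HasSum (fun n => LSeries.term ↗(Hf p) s n)
      ((1 + (p : ℂ) ^ (-s))⁻¹ * ((riemannZeta (2 * s))⁻¹ * riemannZeta s *
        (riemannZeta s * riemannZeta s))) := hprod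
  have h3 := hH.mul_left 2
  have h4 : HasSum (fun n => 2 * LSeries.term ↗(Hf p) s (n + 1))
      (2 * ((1 + (p : ℂ) ^ (-s))⁻¹ * ((riemannZeta (2 * s))⁻¹ * riemannZeta s *
        (riemannZeta s * riemannZeta s)))) := by
    rw [hasSum_nat_add_iff (f := fun n => 2 * LSeries.term (fun n => (Hf p) n) s n) 1]
    simpa using h3
  have hfun : (fun n : ℕ => (((p * (n + 1) ^ 2 : ℕ).divisors.card : ℂ)) / ((n + 1 : ℕ) : ℂ) ^ s) =
      fun n => 2 * LSeries.term ↗(Hf p) s (n + 1) := by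
    funext n
    rw [LSeries.term_of_ne_zero (Nat.succ_ne_zero n)]
    simp only [Hf, ArithmeticFunction.coe_mk]
    ring
  have hC : 2 * ((1 + (p : ℂ) ^ (-s))⁻¹ * ((riemannZeta (2 * s))⁻¹ * riemannZeta s *
        (riemannZeta s * riemannZeta s))) =
      2 / (1 + (p : ℂ) ^ (-s)) * (riemannZeta s ^ 3 / riemannZeta (2 * s)) := by
    rw [div_eq_mul_inv, div_eq_mul_inv]
    ring
  rw [hfun, ← hC]
  exact h4
end

section
/- Let p be a prime. For every complex number s with Re(s) > 1, the series ∑_{ℓ=1}^{∞} τ(p²·ℓ²)·ℓ^{−s} converges and equals ((3−p^{−s})/(1+p^{−s}))·ζ(s)³/ζ(2s). -/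
open Complex ArithmeticFunction Finset
open scoped LSeries.notation

namespace Stmt6Aux


/-- The arithmetic function equal to `μ k` at `k ^ 2` and `0` off squares. -/
noncomputable def sqmu : ArithmeticFunction ℂ :=
  ⟨fun n => if IsSquare n then ((moebius n.sqrt : ℤ) : ℂ) else 0, by
    simp [Nat.sqrt_zero]⟩

lemma sqmu_apply {n : ℕ} : sqmu n = if IsSquare n then ((moebius n.sqrt : ℤ) : ℂ) else 0 := rfl

lemma sqmu_sq' (k : ℕ) : sqmu (k * k) = ((moebius k : ℤ) : ℂ) := by
  rw [sqmu_apply, if_pos ⟨k, rfl⟩, Nat.sqrt_eq]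

lemma sqmu_sq (k : ℕ) : sqmu (k ^ 2) = ((moebius k : ℤ) : ℂ) := by
  rw [sq, sqmu_sq']

lemma sqmu_not_square {n : ℕ} (h : ¬ IsSquare n) : sqmu n = 0 := if_neg h

lemma isSquare_of_coprime_mul {m n c : ℕ} (h : Nat.Coprime m n) (hc : m * n = c * c)
    (hm : m ≠ 0) : IsSquare m := by
  obtain ⟨d, hd⟩ := exists_eq_pow_of_mul_eq_pow (k := 2)
    (by rw [show GCDMonoid.gcd m n = Nat.gcd m n from rfl, h]; exact isUnit_one)
    (show m * n = c ^ 2 by rw [hc, sq])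
  exact ⟨d, by rw [hd, sq]⟩

lemma isMultiplicative_sqmu : sqmu.IsMultiplicative := by
  refine ⟨by simpa using sqmu_sq' 1, ?_⟩
  intro m n hmn
  by_cases hm : IsSquare m
  · by_cases hn : IsSquare n
    · obtain ⟨a, rfl⟩ := hm
      obtain ⟨b, rfl⟩ := hn
      have hab : a.Coprime b :=
        ((hmn.coprime_dvd_left (dvd_mul_left a a)).coprime_dvd_right (dvd_mul_left b b))
      rw [show a * a * (b * b) = (a * b) * (a * b) by ring, sqmu_sq', sqmu_sq', sqmu_sq',
        isMultiplicative_moebius.map_mul_of_coprime hab]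
      push_cast
      ring
    · rw [sqmu_not_square hn, mul_zero, sqmu_not_square ?_]
      rintro ⟨c, hc⟩
      have hn0 : n ≠ 0 := fun h => hn (h ▸ ⟨0, rfl⟩)
      exact hn (isSquare_of_coprime_mul hmn.symm (by rw [mul_comm]; exact hc) hn0)
  · rw [sqmu_not_square hm, zero_mul, sqmu_not_square ?_]
    rintro ⟨c, hc⟩
    have hm0 : m ≠ 0 := fun h => hm (h ▸ ⟨0, rfl⟩)
    exact hm (isSquare_of_coprime_mul hmn hc hm0)

lemma sqmu_prime_pow {q : ℕ} (hq : q.Prime) (c : ℕ) :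
    sqmu (q ^ c) = if c = 0 then 1 else if c = 2 then -1 else 0 := by
  rcases Nat.even_or_odd c with ⟨m, rfl⟩ | hodd
  · rw [show q ^ (m + m) = (q ^ m) * (q ^ m) by ring, sqmu_sq']
    match m with
    | 0 => simp
    | 1 => simp [moebius_apply_prime hq]
    | (m + 2) =>
      rw [moebius_apply_prime_pow hq (by omega)]
      have h1 : m + 2 ≠ 1 := by omega
      have h2 : m + 2 + (m + 2) ≠ 0 := by omega
      have h3 : m + 2 + (m + 2) ≠ 2 := by omega
      simp [h1, h2, h3]
  · have hsq : ¬ IsSquare (q ^ c) := by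
      rintro ⟨r, hr⟩
      have hr0 : r ≠ 0 := by
        rintro rfl
        exact pow_ne_zero c hq.pos.ne' (by simpa using hr)
      have := congrArg (fun t => t.factorization q) hr
      simp only [Nat.Prime.factorization_pow hq, Finsupp.single_eq_same,
        Nat.factorization_mul hr0 hr0, Finsupp.coe_add, Pi.add_apply] at this
      exact (Nat.not_even_iff_odd.mpr hodd) ⟨r.factorization q, this⟩
    rw [sqmu_not_square hsq]
    have h0 : c ≠ 0 := by rintro rfl; exact (Nat.not_even_iff_odd.mpr hodd) Even.zero
    have h2 : c ≠ 2 := by rintro rfl; exact (Nat.not_even_iff_odd.mpr hodd) ⟨1, rfl⟩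
    simp [h0, h2]



/-- ζ as a ℂ-valued arithmetic function -/
noncomputable def zc : ArithmeticFunction ℂ := ↑(ArithmeticFunction.zeta : ArithmeticFunction ℕ)

lemma zc_apply_ne {n : ℕ} (h : n ≠ 0) : zc n = 1 := by
  simp [zc, natCoe_apply, zeta_apply_ne h]

/-- the function n ↦ τ(n²) -/
noncomputable def tau2 : ArithmeticFunction ℂ :=
  ⟨fun n => (((n ^ 2).divisors.card : ℕ) : ℂ), by simp⟩

lemma tau2_apply (n : ℕ) : tau2 n = (((n ^ 2).divisors.card : ℕ) : ℂ) := rfl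

lemma card_divisors_pp {q : ℕ} (hq : q.Prime) (j : ℕ) :
    (q ^ j).divisors.card = j + 1 := by
  rw [Nat.divisors_prime_pow hq, Finset.card_map, Finset.card_range]

lemma isMultiplicative_tau2 : tau2.IsMultiplicative := by
  constructor
  · simp [tau2_apply]
  · intro m n hmn
    simp only [tau2_apply]
    rw [mul_pow, Nat.Coprime.card_divisors_mul (Nat.Coprime.pow 2 2 hmn)]
    push_cast
    ring

lemma mul_apply_pp (f g : ArithmeticFunction ℂ) {q : ℕ} (hq : q.Prime) (e : ℕ) :
    (f * g) (q ^ e) = ∑ i ∈ range (e + 1), f (q ^ i) * g (q ^ (e - i)) := by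
  rw [mul_apply, ← Nat.map_div_right_divisors, Finset.sum_map,
    Nat.divisors_prime_pow hq, Finset.sum_map]
  refine Finset.sum_congr rfl fun i hi => ?_
  have hle : i ≤ e := by simpa [Nat.lt_succ] using hi
  simp only [Function.Embedding.coeFn_mk]
  show f (q ^ i) * g (q ^ e / q ^ i) = _
  rw [Nat.pow_div hle hq.pos]


lemma zc2_pp {q : ℕ} (hq : q.Prime) (j : ℕ) :
    (zc * zc) (q ^ j) = ((j : ℂ) + 1) := by
  rw [mul_apply_pp _ _ hq]
  rw [Finset.sum_congr rfl (fun i _ => by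
    rw [zc_apply_ne (pow_ne_zero _ hq.pos.ne'), zc_apply_ne (pow_ne_zero _ hq.pos.ne'),
      one_mul])]
  simp [Finset.sum_const, Finset.card_range]

lemma zc3_pp {q : ℕ} (hq : q.Prime) (j : ℕ) :
    (zc * zc * zc) (q ^ j) = ∑ i ∈ range (j + 1), ((i : ℂ) + 1) := by
  rw [mul_apply_pp _ _ hq]
  refine Finset.sum_congr rfl fun i _ => ?_
  rw [zc2_pp hq, zc_apply_ne (pow_ne_zero _ hq.pos.ne'), mul_one]


lemma isMultiplicative_zc : zc.IsMultiplicative := isMultiplicative_zeta.natCast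

lemma tau2_eq : tau2 = sqmu * (zc * zc * zc) := by
  rw [IsMultiplicative.eq_iff_eq_on_prime_powers _ isMultiplicative_tau2 _
    (isMultiplicative_sqmu.mul
      ((isMultiplicative_zc.mul isMultiplicative_zc).mul isMultiplicative_zc))]
  intro q e hq
  have hL : tau2 (q ^ e) = ((2 * e + 1 : ℕ) : ℂ) := by
    rw [tau2_apply, ← pow_mul, card_divisors_pp hq]
    norm_cast
    omega
  rw [hL, mul_apply_pp _ _ hq]
  rw [Finset.sum_congr rfl (fun i hi =>
    show sqmu (q ^ i) * (zc * zc * zc) (q ^ (e - i)) =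
      (if i = 0 then (zc * zc * zc) (q ^ e) else 0)
        + (if i = 2 then -((zc * zc * zc) (q ^ (e - 2))) else 0) from by
      rw [sqmu_prime_pow hq]
      rcases eq_or_ne i 0 with rfl | h0
      · rw [if_pos rfl, if_pos rfl, if_neg (by omega : (0:ℕ) ≠ 2), Nat.sub_zero, one_mul,
          add_zero]
      · rcases eq_or_ne i 2 with rfl | h2
        · rw [if_neg h0, if_neg h0, if_pos rfl, if_pos rfl, neg_one_mul, zero_add]
        · rw [if_neg h0, if_neg h2, if_neg h0, if_neg h2, zero_mul, add_zero])]
  rw [Finset.sum_add_distrib, Finset.sum_ite_eq' (range (e + 1)) 0,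
    Finset.sum_ite_eq' (range (e + 1)) 2]
  simp only [Finset.mem_range, Nat.lt_succ, Nat.zero_le, if_true, if_pos (Nat.zero_le e)]
  rcases e with _ | _ | m
  · rw [if_neg (by omega), zc3_pp hq, add_zero, Finset.sum_range_one]
    norm_num
  · rw [if_neg (by omega), zc3_pp hq, add_zero, Finset.sum_range_succ, Finset.sum_range_one]
    norm_num
  · rw [if_pos (by omega), zc3_pp hq, show m + 2 - 2 = m from rfl, zc3_pp hq,
      Finset.sum_range_succ, Finset.sum_range_succ]
    push_cast
    ring


lemma hasSum_sqmu {s : ℂ} (hs : 1 < s.re) :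
    LSeriesHasSum (⇑sqmu) s ((riemannZeta (2 * s))⁻¹) := by
  have h2s : 1 < (2 * s).re := by
    have : (2 * s).re = 2 * s.re := by simp [Complex.mul_re]
    rw [this]; linarith
  have hζ2 : riemannZeta (2 * s) ≠ 0 := riemannZeta_ne_zero_of_one_lt_re h2s
  have hμsum : LSeriesSummable ↗(moebius) (2 * s) := LSeriesSummable_moebius_iff.mpr h2s
  have hμval : L ↗(moebius) (2 * s) = (riemannZeta (2 * s))⁻¹ := by
    have h1 := LSeries_zeta_mul_Lseries_moebius h2s
    rw [LSeries_zeta_eq_riemannZeta h2s] at h1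
    field_simp
    linear_combination h1
  have hμ : LSeriesHasSum ↗(moebius) (2 * s) ((riemannZeta (2 * s))⁻¹) := by
    rw [← hμval]; exact hμsum.hasSum
  have hinj : Function.Injective (fun k : ℕ => k ^ 2) :=
    fun a b h => Nat.pow_left_injective (by norm_num) h
  have hvan : ∀ n, n ∉ Set.range (fun k : ℕ => k ^ 2) → LSeries.term (⇑sqmu) s n = 0 := by
    intro n hn
    have hns : ¬ IsSquare n := by
      rintro ⟨r, rfl⟩
      exact hn ⟨r, by simpa [sq] using rfl⟩
    rcases eq_or_ne n 0 with rfl | h0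
    · exact LSeries.term_zero _ _
    · rw [LSeries.term_of_ne_zero h0, sqmu_not_square hns, zero_div]
  have hcomp : ∀ k : ℕ, LSeries.term (⇑sqmu) s (k ^ 2) = LSeries.term ↗(moebius) (2 * s) k := by
    intro k
    rcases eq_or_ne k 0 with rfl | hk
    · rw [show (0 : ℕ) ^ 2 = 0 by norm_num, LSeries.term_zero, LSeries.term_zero]
    · rw [LSeries.term_of_ne_zero (pow_ne_zero 2 hk), LSeries.term_of_ne_zero hk, sqmu_sq]
      congr 1
      rw [show (2 : ℂ) * s = ((2 : ℕ) : ℂ) * s by norm_num, natCast_cpow_natCast_mul]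
      push_cast
      ring
  have heq : (LSeries.term (⇑sqmu) s) ∘ (fun k : ℕ => k ^ 2) = LSeries.term ↗(moebius) (2 * s) :=
    funext hcomp
  exact (hinj.hasSum_iff hvan).mp (heq ▸ hμ)


lemma hasSum_tau2 {s : ℂ} (hs : 1 < s.re) :
    LSeriesHasSum (⇑tau2) s (riemannZeta s ^ 3 * (riemannZeta (2 * s))⁻¹) := by
  have hz : LSeriesHasSum (⇑zc) s (riemannZeta s) := by
    have h := LSeriesHasSum_zeta hs
    have : (⇑zc : ℕ → ℂ) = ↗(ArithmeticFunction.zeta : ArithmeticFunction ℕ) := by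
      funext n; simp [zc, natCoe_apply]
    rwa [this]
  have hconv := (hasSum_sqmu hs).convolution ((hz.convolution hz).convolution hz)
  have hfun : (⇑tau2 : ℕ → ℂ) = ⇑sqmu ⍟ (⇑zc ⍟ ⇑zc ⍟ ⇑zc) := by
    rw [tau2_eq]
    simp only [ArithmeticFunction.coe_mul]
  rw [hfun]
  have : riemannZeta s ^ 3 * (riemannZeta (2 * s))⁻¹
      = (riemannZeta (2 * s))⁻¹ * (riemannZeta s * riemannZeta s * riemannZeta s) := by ring
  rw [this]
  exact hconv


lemma hasSum_two_mul_add {𝕜 : Type*} [NormedField 𝕜] [CompleteSpace 𝕜] {x : 𝕜}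
    (hx : ‖x‖ < 1) (c : 𝕜) :
    HasSum (fun k : ℕ => (2 * k + c) * x ^ k) ((c + (2 - c) * x) / (1 - x) ^ 2) := by
  have hne : (1 : 𝕜) - x ≠ 0 := by
    intro h
    rw [sub_eq_zero] at h
    rw [← h] at hx
    simp at hx
  have h1 := hasSum_geometric_of_norm_lt_one hx
  have h2 := hasSum_coe_mul_geometric_of_norm_lt_one hx
  have h := (h2.mul_left 2).add (h1.mul_left c)
  have heq : (fun k : ℕ => 2 * ((k : 𝕜) * x ^ k) + c * x ^ k)
      = fun k : ℕ => (2 * k + c) * x ^ k := by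
    funext k; ring
  rw [heq] at h
  convert h using 1
  · rfl
  rw [inv_eq_one_div]
  field_simp
  ring


end Stmt6Aux

open Stmt6Aux


set_option maxHeartbeats 2000000 in
theorem stmt_6 (p : ℕ) (hp : p.Prime) (s : ℂ) (hs : 1 < s.re) :
    HasSum (fun n : ℕ => (((p ^ 2 * (n + 1) ^ 2 : ℕ).divisors.card : ℂ)) / ((n + 1 : ℕ) : ℂ) ^ s)
      ((3 - (p : ℂ) ^ (-s)) / (1 + (p : ℂ) ^ (-s)) * (riemannZeta s ^ 3 / riemannZeta (2 * s))) := by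
  classical
  set x : ℂ := (p : ℂ) ^ (-s) with hxdef
  have hp1 : (1 : ℝ) < p := by exact_mod_cast hp.one_lt
  have hxnorm : ‖x‖ < 1 := by
    rw [hxdef, Complex.norm_natCast_cpow_of_pos hp.pos]
    exact Real.rpow_lt_one_of_one_lt_of_neg hp1 (by simp [Complex.neg_re]; linarith)
  have h1x : (1 : ℂ) - x ≠ 0 := by
    intro h
    rw [sub_eq_zero] at h
    rw [← h] at hxnorm
    simp at hxnorm
  have h2x : (1 : ℂ) + x ≠ 0 := by
    intro h
    have hx1 : x = -1 := by linear_combination h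
    rw [hx1] at hxnorm
    simp at hxnorm
  set ZV : ℂ := riemannZeta s ^ 3 * (riemannZeta (2 * s))⁻¹ with hZV
  set F : ℕ → ℂ := fun m => (((m ^ 2).divisors.card : ℕ) : ℂ) / (m : ℂ) ^ s with hF
  set F2 : ℕ → ℂ := fun m => (((p ^ 2 * m ^ 2 : ℕ).divisors.card : ℕ) : ℂ) / (m : ℂ) ^ s with hF2
  have hT : HasSum F ZV := by
    have h := hasSum_tau2 hs
    have heq : LSeries.term (⇑tau2) s = F := by
      funext n
      rcases eq_or_ne n 0 with rfl | hn
      · rw [LSeries.term_zero]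
        simp [hF]
      · rw [LSeries.term_of_ne_zero hn]
        rfl
    have h' : HasSum (LSeries.term (⇑tau2) s) ZV := h
    rwa [heq] at h'
  have hFnorm : Summable (fun n => ‖F n‖) := by
    have hs' : 1 < ((s.re : ℂ)).re := by simpa using hs
    have hσ := hasSum_tau2 hs'
    have hsum := (Complex.hasSum_re hσ.summable.hasSum).summable
    refine hsum.congr fun n => ?_
    rcases eq_or_ne n 0 with rfl | hn
    · simp [hF]
    · rw [LSeries.term_of_ne_zero hn]
      have e1 : ((n : ℂ)) ^ ((s.re : ℂ)) = (((n : ℝ) ^ s.re : ℝ) : ℂ) :=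
        (Complex.ofReal_cpow (Nat.cast_nonneg n) s.re).symm
      have e2 : (tau2 n : ℂ) = ((((n ^ 2).divisors.card : ℕ) : ℝ) : ℂ) := by
        show (((n ^ 2).divisors.card : ℕ) : ℂ) = _
        push_cast
        rfl
      rw [e1, e2, ← Complex.ofReal_div, Complex.ofReal_re, hF]
      simp only []
      rw [norm_div, Complex.norm_natCast,
        Complex.norm_natCast_cpow_of_pos (Nat.pos_of_ne_zero hn)]
  -- decomposition n = p^k * m with p ∤ m
  have hppow_ne : ∀ k : ℕ, p ^ k ≠ 0 := fun k => pow_ne_zero k hp.pos.ne'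
  have hginj : Function.Injective
      (fun km : ℕ × {m : ℕ // ¬ p ∣ m} => p ^ km.1 * km.2.1) := by
    rintro ⟨k, m, hm⟩ ⟨l, n, hn⟩ h
    simp only at h
    have hm0 : m ≠ 0 := fun h0 => hm (h0 ▸ dvd_zero p)
    have hn0 : n ≠ 0 := fun h0 => hn (h0 ▸ dvd_zero p)
    have hk : k = l := by
      have h2 := congrArg (fun t => t.factorization p) h
      simpa [Nat.factorization_mul (hppow_ne k) hm0, Nat.factorization_mul (hppow_ne l) hn0,
        Nat.Prime.factorization_pow hp, Nat.factorization_eq_zero_of_not_dvd hm,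
        Nat.factorization_eq_zero_of_not_dvd hn] using h2
    subst hk
    have hmn : m = n := Nat.eq_of_mul_eq_mul_left (pow_pos hp.pos k) h
    simp [Prod.ext_iff, Subtype.ext_iff, hmn]
  have hgrange : ∀ n : ℕ,
      n ∉ Set.range (fun km : ℕ × {m : ℕ // ¬ p ∣ m} => p ^ km.1 * km.2.1) → n = 0 := by
    intro n hn
    by_contra h0
    exact hn ⟨⟨n.factorization p, ⟨n / p ^ n.factorization p, Nat.not_dvd_ordCompl hp h0⟩⟩,
      Nat.ordProj_mul_ordCompl_eq_self n p⟩
  have hFS : Summable (fun m : {m : ℕ // ¬ p ∣ m} => F m.1) := hT.summable.subtype _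
  set R : ℂ := ∑' m : {m : ℕ // ¬ p ∣ m}, F m.1 with hRdef
  have hFShasSum : HasSum (fun m : {m : ℕ // ¬ p ∣ m} => F m.1) R := hFS.hasSum
  have hFSnorm : Summable (fun m : {m : ℕ // ¬ p ∣ m} => ‖F m.1‖) := hFnorm.subtype _
  -- coefficient series
  have hcoef : ∀ c : ℕ, HasSum (fun k : ℕ => ((2 * k + c : ℕ) : ℂ) * x ^ k)
      (((c : ℂ) + (2 - (c : ℂ)) * x) / (1 - x) ^ 2) := by
    intro c
    have h := hasSum_two_mul_add hxnorm (c : ℂ)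
    have heq : (fun k : ℕ => (2 * (k : ℂ) + (c : ℂ)) * x ^ k)
        = fun k : ℕ => ((2 * k + c : ℕ) : ℂ) * x ^ k := by
      funext k; push_cast; ring
    rwa [heq] at h
  have hcoefnorm : ∀ c : ℕ, Summable (fun k : ℕ => ‖((2 * k + c : ℕ) : ℂ) * x ^ k‖) := by
    intro c
    have h := (hasSum_two_mul_add (x := ‖x‖)
      (by rwa [Real.norm_of_nonneg (norm_nonneg x)]) (c : ℝ)).summable
    refine h.congr fun k => ?_
    rw [norm_mul, norm_pow, Complex.norm_natCast]
    push_cast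
    ring
  -- pointwise identities
  have hxk : ∀ k : ℕ, x ^ k = (((p ^ k : ℕ) : ℂ) ^ s)⁻¹ := by
    intro k
    have h1 : x ^ k = (p : ℂ) ^ ((k : ℂ) * (-s)) := by
      rw [hxdef, ← Complex.cpow_nat_mul]
    rw [h1, mul_neg, Complex.cpow_neg, Complex.natCast_cpow_natCast_mul]
    norm_cast
  have hden : ∀ (k m : ℕ), ((p ^ k * m : ℕ) : ℂ) ^ s
      = ((p ^ k : ℕ) : ℂ) ^ s * ((m : ℕ) : ℂ) ^ s := by
    intro k m
    have h := Complex.mul_cpow_ofReal_nonneg (a := ((p ^ k : ℕ) : ℝ)) (b := ((m : ℕ) : ℝ))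
      (by positivity) (by positivity) s
    push_cast at h ⊢
    exact h
  have hcop : ∀ (a : ℕ) (m : {m : ℕ // ¬ p ∣ m}), Nat.Coprime (p ^ a) (m.1 ^ 2) :=
    fun a m => Nat.Coprime.pow a 2 ((hp.coprime_iff_not_dvd).mpr m.2)
  have hFg : ∀ (k : ℕ) (m : {m : ℕ // ¬ p ∣ m}),
      F (p ^ k * m.1) = ((2 * k + 1 : ℕ) : ℂ) * x ^ k * F m.1 := by
    intro k m
    have hsq : (p ^ k * m.1) ^ 2 = p ^ (2 * k) * m.1 ^ 2 := by ring
    rw [hF]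
    simp only []
    rw [hsq, Nat.Coprime.card_divisors_mul (hcop (2 * k) m), card_divisors_pp hp,
      hden k m.1, hxk k]
    push_cast
    ring
  have hF2g : ∀ (k : ℕ) (m : {m : ℕ // ¬ p ∣ m}),
      F2 (p ^ k * m.1) = ((2 * k + 3 : ℕ) : ℂ) * x ^ k * F m.1 := by
    intro k m
    have hsq : p ^ 2 * (p ^ k * m.1) ^ 2 = p ^ (2 * k + 2) * m.1 ^ 2 := by ring
    rw [hF2, hF]
    simp only []
    rw [hsq, Nat.Coprime.card_divisors_mul (hcop (2 * k + 2) m), card_divisors_pp hp,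
      hden k m.1, hxk k]
    push_cast
    ring
  -- App 1 : identify R
  have happ1 := (hcoef 1).mul hFShasSum ((hcoefnorm 1).mul_norm hFSnorm).of_norm
  have hvanF : ∀ n, n ∉ Set.range (fun km : ℕ × {m : ℕ // ¬ p ∣ m} => p ^ km.1 * km.2.1) →
      F n = 0 := by
    intro n hn
    rw [hgrange n hn, hF]
    simp
  have h1' : HasSum ((F ∘ fun km : ℕ × {m : ℕ // ¬ p ∣ m} => p ^ km.1 * km.2.1))
      ((((1 : ℕ) : ℂ) + (2 - ((1 : ℕ) : ℂ)) * x) / (1 - x) ^ 2 * R) := by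
    have heq : (F ∘ fun km : ℕ × {m : ℕ // ¬ p ∣ m} => p ^ km.1 * km.2.1)
        = fun z : ℕ × {m : ℕ // ¬ p ∣ m} => ((2 * z.1 + 1 : ℕ) : ℂ) * x ^ z.1 * F z.2.1 :=
      funext fun z => hFg z.1 z.2
    rw [heq]
    exact happ1
  have hkey : (((1 : ℕ) : ℂ) + (2 - ((1 : ℕ) : ℂ)) * x) / (1 - x) ^ 2 * R = ZV :=
    h1'.unique ((hginj.hasSum_iff hvanF).mpr hT)
  -- App 2
  have happ2 := (hcoef 3).mul hFShasSum ((hcoefnorm 3).mul_norm hFSnorm).of_norm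
  have hvanF2 : ∀ n, n ∉ Set.range (fun km : ℕ × {m : ℕ // ¬ p ∣ m} => p ^ km.1 * km.2.1) →
      F2 n = 0 := by
    intro n hn
    rw [hgrange n hn, hF2]
    simp
  have h2' : HasSum ((F2 ∘ fun km : ℕ × {m : ℕ // ¬ p ∣ m} => p ^ km.1 * km.2.1))
      ((((3 : ℕ) : ℂ) + (2 - ((3 : ℕ) : ℂ)) * x) / (1 - x) ^ 2 * R) := by
    have heq : (F2 ∘ fun km : ℕ × {m : ℕ // ¬ p ∣ m} => p ^ km.1 * km.2.1)
        = fun z : ℕ × {m : ℕ // ¬ p ∣ m} => ((2 * z.1 + 3 : ℕ) : ℂ) * x ^ z.1 * F z.2.1 :=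
      funext fun z => hF2g z.1 z.2
    rw [heq]
    exact happ2
  have hF2sum : HasSum F2 ((((3 : ℕ) : ℂ) + (2 - ((3 : ℕ) : ℂ)) * x) / (1 - x) ^ 2 * R) :=
    (hginj.hasSum_iff hvanF2).mp h2'
  -- shift the index
  have hshift : HasSum (fun n : ℕ => F2 (n + 1))
      ((((3 : ℕ) : ℂ) + (2 - ((3 : ℕ) : ℂ)) * x) / (1 - x) ^ 2 * R) := by
    refine (hasSum_nat_add_iff 1).mpr ?_
    have hF20 : ∑ i ∈ range 1, F2 i = 0 := by
      rw [Finset.sum_range_one, hF2]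
      simp
    rw [hF20, add_zero]
    exact hF2sum
  -- final value computation
  have hζ2 : riemannZeta (2 * s) ≠ 0 := by
    refine riemannZeta_ne_zero_of_one_lt_re ?_
    have : (2 * s).re = 2 * s.re := by simp [Complex.mul_re]
    rw [this]; linarith
  have hval : (((3 : ℕ) : ℂ) + (2 - ((3 : ℕ) : ℂ)) * x) / (1 - x) ^ 2 * R
      = (3 - x) / (1 + x) * (riemannZeta s ^ 3 / riemannZeta (2 * s)) := by
    have hRval : R = ZV * (1 - x) ^ 2 / (1 + x) := by
      rw [eq_div_iff h2x]
      push_cast at hkey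
      field_simp at hkey
      linear_combination hkey
    rw [hRval, hZV]
    push_cast
    field_simp
    ring
  rw [← hval]
  exact hshift
end
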